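/- For every argumentation framework F = (A, R), every S ⊆ A, every a ∈ A, and every ordinal α: C_S^α(a) = {b ∈ A | there is a directed R-path from a to b and a directed R-path from b to a, both lying entirely within A \ Δ^α_{F,S}}. -/

import Mathlib

/-!
Basic notions of abstract argumentation frameworks, following
Andrews–San Mauro, "SCC-recursiveness in infinite argumentation".
-/

universe u

/-- An argumentation framework: a set `A` of arguments together with an
attack relation `R ⊆ A × A`. -/
structure AF (α : Type u) where
  A : Set α
  R : α → α → Prop
  attack_mem : ∀ ⦃a b : α⦄, R a b → a ∈ A ∧ b ∈ A

namespace AF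

variable {α : Type u}

/-- The restriction `F↾U = (A ∩ U, R ∩ (U × U))`. -/
def restrict (F : AF α) (U : Set α) : AF α where
  A := F.A ∩ U
  R a b := F.R a b ∧ a ∈ U ∧ b ∈ U
  attack_mem := by
    intro a b h
    exact ⟨⟨(F.attack_mem h.1).1, h.2.1⟩, ⟨(F.attack_mem h.1).2, h.2.2⟩⟩

/-- `S` is conflict-free: `S ⊆ A` and no argument of `S` attacks another. -/
def ConflictFree (F : AF α) (S : Set α) : Prop :=
  S ⊆ F.A ∧ ∀ a ∈ S, ∀ b ∈ S, ¬ F.R a b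

/-- `S` is a naive extension: conflict-free and ⊆-maximal among conflict-free sets. -/
def Naive (F : AF α) (S : Set α) : Prop :=
  ConflictFree F S ∧ ∀ T, ConflictFree F T → S ⊆ T → S = T

/-- `S⁺`: the set of arguments attacked by `S`. -/
def plus (F : AF α) (S : Set α) : Set α := {x | ∃ y ∈ S, F.R y x}

/-- The range `S⊕ = S ∪ S⁺`. -/
def rng (F : AF α) (S : Set α) : Set α := S ∪ plus F S

/-- `S` is a stage extension: conflict-free with ⊆-maximal range among
conflict-free sets. -/
def Stage (F : AF α) (S : Set α) : Prop :=
  ConflictFree F S ∧ ¬ ∃ T, ConflictFree F T ∧ rng F S ⊂ rng F T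

/-- `F` is finitary: every argument has finitely many attackers. -/
def Finitary (F : AF α) : Prop := ∀ a, {x | F.R x a}.Finite

/-- There is a directed path from `a` to `b` in `F` (both being arguments of `F`). -/
def Reach (F : AF α) (a b : α) : Prop :=
  a ∈ F.A ∧ b ∈ F.A ∧ Relation.ReflTransGen F.R a b

/-- The strongly connected component of `a` in `F`. -/
def SCCof (F : AF α) (a : α) : Set α := {b | Reach F a b ∧ Reach F b a}

/-- `X` is a strongly connected component of `F`. -/
def IsSCC (F : AF α) (X : Set α) : Prop := ∃ a ∈ F.A, X = SCCof F a

/-- `D_S(X)`: the elements of `X` attacked by an element of `S` outside `X`. -/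
def Dset (F : AF α) (S X : Set α) : Set α := {b ∈ X | ∃ a ∈ S \ X, F.R a b}

/-- `S` is a cf1.5-extension of `F`. -/
def CF15 (F : AF α) (S : Set α) : Prop :=
  ConflictFree F S ∧
    ∀ X, IsSCC F X → Naive (F.restrict (X \ Dset F S X)) (S ∩ X)

/-- `S` is a stg1.5-extension of `F`. -/
def STG15 (F : AF α) (S : Set α) : Prop :=
  ConflictFree F S ∧
    ∀ X, IsSCC F X → Stage (F.restrict (X \ Dset F S X)) (S ∩ X)

/-- `C_S^α(a)`, defined by transfinite recursion. -/
noncomputable def Cseq (F : AF α) (S : Set α) (a : α) (o : Ordinal.{0}) : Set α :=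
  Ordinal.limitRecOn o (SCCof F a)
    (fun _ C => SCCof (F.restrict (C \ Dset F S C)) a)
    (fun o' _ ih => SCCof (F.restrict (⋂ β : {β : Ordinal.{0} // β < o'}, ih β.1 β.2)) a)

/-- The component ordinal `α_S(a)`: the least `α` with `a ∉ C_S^α(a)` or
`C_S^{α+1}(a) = C_S^α(a)`. -/
noncomputable def alphaS (F : AF α) (S : Set α) (a : α) : Ordinal.{0} :=
  sInf {o | a ∉ Cseq F S a o ∨ Cseq F S a (o + 1) = Cseq F S a o}

/-- `S` is an icft-extension (tfcf2-extension) of `F`. -/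
def ICFT (F : AF α) (S : Set α) : Prop :=
  ConflictFree F S ∧ ∀ a ∈ F.A,
    a ∉ Cseq F S a (alphaS F S a) ∨
      Naive (F.restrict (Cseq F S a (alphaS F S a))) (S ∩ Cseq F S a (alphaS F S a))

/-- `S` is an istgt-extension (tf-stg2-extension) of `F`. -/
def ISTGT (F : AF α) (S : Set α) : Prop :=
  ConflictFree F S ∧ ∀ a ∈ F.A,
    a ∉ Cseq F S a (alphaS F S a) ∨
      Stage (F.restrict (Cseq F S a (alphaS F S a))) (S ∩ Cseq F S a (alphaS F S a))

/-- The characteristic function `f_F`. -/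
def charF (F : AF α) (S : Set α) : Set α :=
  {x ∈ F.A | ∀ y, F.R y x → ∃ z ∈ S, F.R z y}

/-- `G` is the grounded extension of `F`: the least fixed point of `f_F`. -/
def IsGrounded (F : AF α) (G : Set α) : Prop :=
  charF F G = G ∧ ∀ T, charF F T = T → G ⊆ T

/-- `conf(F)`: the set of conflicting pairs of `F`. -/
def confl (F : AF α) : Set (α × α) := {p | F.R p.1 p.2 ∨ F.R p.2 p.1}

/-- The operator `Δ_{F,S}(D)`. -/
def DeltaOp (F : AF α) (S D : Set α) : Set α :=
  {a ∈ F.A | ∃ b ∈ S, F.R b a ∧ ¬ Reach (F.restrict (F.A \ D)) a b}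

/-- `Δ^α_{F,S}`, defined by transfinite recursion. -/
noncomputable def Deltaseq (F : AF α) (S : Set α) (o : Ordinal.{0}) : Set α :=
  Ordinal.limitRecOn o (∅ : Set α)
    (fun _ D => DeltaOp F S D)
    (fun o' _ ih => ⋃ β : {β : Ordinal.{0} // β < o'}, ih β.1 β.2)

/-- The least fixed point `Δ_{F,S}` of the monotone operator `Δ_{F,S}(·)`,
given by Knaster–Tarski as the intersection of all prefixed points. -/
def DeltaFix (F : AF α) (S : Set α) : Set α :=
  ⋂₀ {D | DeltaOp F S D ⊆ D}

end AF

/-!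
By induction on `α`, `C_S^α(a)` is the strongly connected component of `a` in
`F↾(A \ Δ^α)`. The engine is that a path between two members of an SCC never leaves
it: if the SCC of `a` in `F↾U` lies inside some `V ⊆ U`, it is also the SCC of `a`
in `F↾V`. At a successor, removing `D_S(C)` from `C = C_S^α(a)` removes exactly the
arguments of `C` attacked from `S` by an argument that lies outside `C`, i.e. that they
cannot reach back inside `A \ Δ^α`; these are the arguments of `C` in `Δ^{α+1}`.
At a limit, intersecting the SCCs of `a` in the frameworks `F↾(A \ Δ^β)` gives the SCC
of `a` in their intersection `F↾(A \ ⋃_β Δ^β)`.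
-/

namespace AF

variable {α : Type u} {F : AF α}

section Reach

theorem Reach.trans {a b c : α} (hab : Reach F a b) (hbc : Reach F b c) : Reach F a c :=
  ⟨hab.1, hbc.2.1, hab.2.2.trans hbc.2.2⟩

theorem Reach.of_R {a b : α} (h : F.R a b) : Reach F a b :=
  ⟨(F.attack_mem h).1, (F.attack_mem h).2, .single h⟩

theorem Reach.restrict_mono {U V : Set α} (hUV : U ⊆ V) {a b : α}
    (h : Reach (F.restrict U) a b) : Reach (F.restrict V) a b :=
  ⟨⟨h.1.1, hUV h.1.2⟩, ⟨h.2.1.1, hUV h.2.1.2⟩,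
    Relation.ReflTransGen.mono (fun _ _ hxy => ⟨hxy.1, hUV hxy.2.1, hUV hxy.2.2⟩) _ _ h.2.2⟩

theorem reach_restrict_A_iff {a b : α} : Reach (F.restrict F.A) a b ↔ Reach F a b :=
  ⟨fun ⟨ha, hb, hp⟩ => ⟨ha.1, hb.1, Relation.ReflTransGen.mono (fun _ _ h => h.1) _ _ hp⟩,
    fun ⟨ha, hb, hp⟩ => ⟨⟨ha, ha⟩, ⟨hb, hb⟩,
      Relation.ReflTransGen.mono
        (fun _ _ h => ⟨h, (F.attack_mem h).1, (F.attack_mem h).2⟩) _ _ hp⟩⟩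

theorem SCCof_restrict_A (a : α) : SCCof (F.restrict F.A) a = SCCof F a := by
  ext b
  simp only [SCCof, Set.mem_ofPred_eq, reach_restrict_A_iff]

theorem SCCof_restrict_mono {U V : Set α} (hUV : U ⊆ V) (a : α) :
    SCCof (F.restrict U) a ⊆ SCCof (F.restrict V) a :=
  fun _ hb => ⟨hb.1.restrict_mono hUV, hb.2.restrict_mono hUV⟩

theorem reflTransGen_restrict_of_SCCof_subset {U V : Set α} {a x y : α}
    (hV : SCCof (F.restrict U) a ⊆ V) (hxy : Relation.ReflTransGen (F.restrict U).R x y)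
    (hax : Reach (F.restrict U) a x) (hya : Reach (F.restrict U) y a) :
    Relation.ReflTransGen (F.restrict V).R x y := by
  induction hxy using Relation.ReflTransGen.head_induction_on with
  | refl => exact .refl
  | @head x z hxz hzy ih =>
    have hza : Reach (F.restrict U) z a := ⟨(Reach.of_R hxz).2.1, hya.2.1, hzy.trans hya.2.2⟩
    have haz : Reach (F.restrict U) a z := hax.trans (.of_R hxz)
    exact .head ⟨hxz.1, hV ⟨hax, (Reach.of_R hxz).trans hza⟩, hV ⟨haz, hza⟩⟩ (ih haz)

theorem SCCof_restrict_eq_of_subset {U V : Set α} {a : α} (hVU : V ⊆ U)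
    (hV : SCCof (F.restrict U) a ⊆ V) : SCCof (F.restrict V) a = SCCof (F.restrict U) a := by
  refine (SCCof_restrict_mono hVU a).antisymm fun b ⟨hab, hba⟩ => ?_
  have haa := hab.trans hba
  have haV : a ∈ V := hV ⟨haa, haa⟩
  have hbV : b ∈ V := hV ⟨hab, hba⟩
  exact ⟨⟨⟨hab.1.1, haV⟩, ⟨hab.2.1.1, hbV⟩,
      reflTransGen_restrict_of_SCCof_subset hV hab.2.2 haa hba⟩,
    ⟨⟨hab.2.1.1, hbV⟩, ⟨hab.1.1, haV⟩,
      reflTransGen_restrict_of_SCCof_subset hV hba.2.2 hab haa⟩⟩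

end Reach

section Recursion

variable (F) (S : Set α)

theorem Deltaseq_zero : Deltaseq F S 0 = ∅ :=
  Ordinal.limitRecOn_zero ..

theorem Deltaseq_add_one (o : Ordinal.{0}) :
    Deltaseq F S (o + 1) = DeltaOp F S (Deltaseq F S o) :=
  Ordinal.limitRecOn_add_one ..

theorem Deltaseq_limit {o : Ordinal.{0}} (ho : Order.IsSuccLimit o) :
    Deltaseq F S o = ⋃ β : {β : Ordinal.{0} // β < o}, Deltaseq F S β.1 :=
  Ordinal.limitRecOn_limit _ _ _ _ ho

theorem Cseq_zero (a : α) : Cseq F S a 0 = SCCof F a :=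
  Ordinal.limitRecOn_zero ..

theorem Cseq_add_one (a : α) (o : Ordinal.{0}) :
    Cseq F S a (o + 1) = SCCof (F.restrict (Cseq F S a o \ Dset F S (Cseq F S a o))) a :=
  Ordinal.limitRecOn_add_one ..

theorem Cseq_limit (a : α) {o : Ordinal.{0}} (ho : Order.IsSuccLimit o) :
    Cseq F S a o = SCCof (F.restrict (⋂ β : {β : Ordinal.{0} // β < o}, Cseq F S a β.1)) a :=
  Ordinal.limitRecOn_limit _ _ _ _ ho

end Recursion

section Delta

variable {S : Set α}

theorem DeltaOp_mono {D D' : Set α} (h : D ⊆ D') : DeltaOp F S D ⊆ DeltaOp F S D' :=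
  fun _ ⟨hxA, b, hbS, hbx, hnr⟩ =>
    ⟨hxA, b, hbS, hbx, fun hr => hnr (hr.restrict_mono (Set.sdiff_subset_sdiff_right h))⟩

theorem Deltaseq_subset_DeltaOp (o : Ordinal.{0}) :
    Deltaseq F S o ⊆ DeltaOp F S (Deltaseq F S o) := by
  induction o using Ordinal.limitRecOn with
  | zero => simp only [Deltaseq_zero, Set.empty_subset]
  | add_one o ih => rw [Deltaseq_add_one]; exact DeltaOp_mono ih
  | limit o ho ih =>
    rw [Deltaseq_limit F S ho]
    exact Set.iUnion_subset fun β => (ih β.1 β.2).trans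
      (DeltaOp_mono (Set.subset_iUnion (fun β : {β // β < o} => Deltaseq F S β.1) β))

variable {Δ : Set α} {a : α}

theorem Dset_SCCof_subset_DeltaOp :
    Dset F S (SCCof (F.restrict (F.A \ Δ)) a) ⊆ DeltaOp F S Δ := by
  rintro d ⟨⟨had, hda⟩, s, ⟨hsS, hsC⟩, hsd⟩
  refine ⟨had.2.1.1, s, hsS, hsd, fun hds => hsC ⟨had.trans hds, ?_⟩⟩
  exact (Reach.of_R (F := F.restrict (F.A \ Δ)) ⟨hsd, hds.2.1.2, had.2.1.2⟩).trans hda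

theorem SCCof_diff_Dset_subset :
    SCCof (F.restrict (F.A \ Δ)) a \ Dset F S (SCCof (F.restrict (F.A \ Δ)) a) ⊆
      F.A \ DeltaOp F S Δ := by
  rintro v ⟨hvC, hvD⟩
  refine ⟨hvC.1.2.1.1, fun hvΔ => ?_⟩
  obtain ⟨-, s, hsS, hsv, hnr⟩ := hvΔ
  by_cases hsC : s ∈ SCCof (F.restrict (F.A \ Δ)) a
  · exact hnr (hvC.2.trans hsC.1)
  · exact hvD ⟨hvC, s, ⟨hsS, hsC⟩, hsv⟩

theorem SCCof_diff_Dset_eq (hΔ : Δ ⊆ DeltaOp F S Δ) :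
    SCCof (F.restrict (SCCof (F.restrict (F.A \ Δ)) a \
        Dset F S (SCCof (F.restrict (F.A \ Δ)) a))) a =
      SCCof (F.restrict (F.A \ DeltaOp F S Δ)) a := by
  refine SCCof_restrict_eq_of_subset SCCof_diff_Dset_subset fun v hv => ⟨?_, fun hvD => ?_⟩
  · exact SCCof_restrict_mono (Set.sdiff_subset_sdiff_right hΔ) a hv
  · exact hv.1.2.1.2.2 (Dset_SCCof_subset_DeltaOp hvD)

end Delta

theorem SCCof_iInter_eq {ι : Sort*} [Nonempty ι] (Δ : ι → Set α) (a : α) :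
    SCCof (F.restrict (⋂ i, SCCof (F.restrict (F.A \ Δ i)) a)) a =
      SCCof (F.restrict (F.A \ ⋃ i, Δ i)) a := by
  have hsub : ∀ i, F.A \ ⋃ i, Δ i ⊆ F.A \ Δ i :=
    fun i => Set.sdiff_subset_sdiff_right (Set.subset_iUnion Δ i)
  refine SCCof_restrict_eq_of_subset (fun v hv => ⟨?_, ?_⟩) fun v hv =>
    Set.mem_iInter.2 fun i => SCCof_restrict_mono (hsub i) a hv
  · obtain ⟨i⟩ := ‹Nonempty ι›
    exact (Set.mem_iInter.1 hv i).1.2.1.1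
  · exact Set.mem_iUnion.not.2 fun ⟨i, hvi⟩ => (Set.mem_iInter.1 hv i).1.2.1.2.2 hvi

end AF

/-- `C_S^α(a)` consists exactly of the `b` that are reachable
from `a` and reach back `a` via paths lying entirely within `A \ Δ^α_{F,S}`. -/
theorem statement18 {α : Type u} (F : AF α) (S : Set α) (a : α) (o : Ordinal.{0}) :
    AF.Cseq F S a o =
      {b | AF.Reach (F.restrict (F.A \ AF.Deltaseq F S o)) a b ∧
           AF.Reach (F.restrict (F.A \ AF.Deltaseq F S o)) b a} := by
  change _ = AF.SCCof (F.restrict (F.A \ AF.Deltaseq F S o)) a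
  induction o using Ordinal.limitRecOn with
  | zero => rw [AF.Cseq_zero, AF.Deltaseq_zero, Set.sdiff_empty, AF.SCCof_restrict_A]
  | add_one o ih =>
    rw [AF.Cseq_add_one, AF.Deltaseq_add_one, ih]
    exact AF.SCCof_diff_Dset_eq (AF.Deltaseq_subset_DeltaOp o)
  | limit o ho ih =>
    have : Nonempty {β : Ordinal.{0} // β < o} := ⟨⟨0, ho.bot_lt⟩⟩
    rw [AF.Cseq_limit F S a ho, AF.Deltaseq_limit F S ho,
      Set.iInter_congr fun β : {β // β < o} => ih β.1 β.2]
    exact AF.SCCof_iInter_eq _ a
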